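/- arXiv:0707.0114 — 4 statements merged into one kernel-verified Lean document; each statement's English description precedes it below -/
import Mathlib

section
/- Let V be a type and E : V → V → Prop a directed graph relation that is acyclic, in the sense that the transitive closure of E is irreflexive. Let Q be a finite set of vertices that is a reachability antichain: for any two distinct q, q' ∈ Q, q' is not reachable from q and q is not reachable from q' under the reflexive-transitive closure of E. Then every directed path contains at most one element of Q, and consequently any finite family of directed paths whose vertex sets jointly cover Q has cardinality at least the cardinality of Q. -/
/-!
Any two vertices on a directed path are comparable under reachability, so a path meets a
reachability antichain in at most one vertex. Hence a family of paths covering the antichain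
must contain a distinct path for each of its elements (weak duality for Dilworth's theorem).
-/

open Finset Relation

theorem List.Pairwise.isChain_setOf_mem {α : Type*} {R : α → α → Prop} {l : List α}
    (h : l.Pairwise R) : _root_.IsChain R {x | x ∈ l} :=
  @Pairwise.set_pairwise _ _ _ (h.imp Or.inl) ⟨fun _ _ => Or.symm⟩

theorem List.IsChain.isChain_reflTransGen {α : Type*} {R : α → α → Prop} {l : List α}
    (h : l.IsChain R) : _root_.IsChain (ReflTransGen R) {x | x ∈ l} :=
  (List.isChain_iff_pairwise.1 (h.imp fun _ _ => ReflTransGen.single)).isChain_setOf_mem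

theorem IsAntichain.card_le_of_cover_isChain {α ι : Type*} {r : α → α → Prop} {s : Finset α}
    (hs : IsAntichain r (s : Set α)) {P : Finset ι} {c : ι → Set α}
    (hc : ∀ i ∈ P, IsChain r (c i)) (hcover : ∀ a ∈ s, ∃ i ∈ P, a ∈ c i) : #s ≤ #P :=
  card_le_card_of_forall_subsingleton (fun a i => a ∈ c i) hcover fun i hi =>
    inter_subsingleton_of_isAntichain_of_isChain hs (hc i hi)

theorem antichain_path_cover_bound_general {V : Type*} [DecidableEq V] (E : V → V → Prop)
    (Q : Finset V)
    (hQ : ∀ q ∈ Q, ∀ q' ∈ Q, q ≠ q' → ¬ Relation.ReflTransGen E q q') :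
    (∀ p : List V, p.Nodup → p.Chain' E →
        (Q.filter (fun q => q ∈ p)).card ≤ 1) ∧
    (∀ P : Finset (List V), (∀ p ∈ P, p.Nodup ∧ p.Chain' E) →
        (∀ q ∈ Q, ∃ p ∈ P, q ∈ p) → Q.card ≤ P.card) := by
  have hanti : IsAntichain (ReflTransGen E) (Q : Set V) := fun q hq q' hq' => hQ q hq q' hq'
  have hpath (p : List V) (hp : p.IsChain E) : IsChain (ReflTransGen E) {x | x ∈ p} :=
    List.IsChain.isChain_reflTransGen hp
  refine ⟨fun p _ hp => card_le_one.2 fun a ha b hb => ?_, fun P hP hcover => ?_⟩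
  · exact inter_subsingleton_of_isAntichain_of_isChain hanti (hpath p hp)
      (mem_filter.1 ha) (mem_filter.1 hb)
  · exact hanti.card_le_of_cover_isChain (fun p hp => hpath p (hP p hp).2) hcover

/-- Let `E` be an acyclic directed graph relation (its transitive
closure is irreflexive) and let `Q` be a finite reachability antichain: no two
distinct elements of `Q` are reachable from one another under the
reflexive-transitive closure of `E`.  Then (1) every directed path (duplicate-free
list of vertices with consecutive pairs related by `E`) contains at most one
element of `Q`, and (2) any finite family of directed paths whose vertices
jointly cover `Q` has cardinality at least that of `Q`. -/
theorem antichain_path_cover_bound {V : Type*} [DecidableEq V] (E : V → V → Prop)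
    (hac : Irreflexive (Relation.TransGen E))
    (Q : Finset V)
    (hQ : ∀ q ∈ Q, ∀ q' ∈ Q, q ≠ q' → ¬ Relation.ReflTransGen E q q') :
    (∀ p : List V, p.Nodup → p.Chain' E →
        (Q.filter (fun q => q ∈ p)).card ≤ 1) ∧
    (∀ P : Finset (List V), (∀ p ∈ P, p.Nodup ∧ p.Chain' E) →
        (∀ q ∈ Q, ∃ p ∈ P, q ∈ p) → Q.card ≤ P.card) :=
  antichain_path_cover_bound_general E Q hQ
end

section
/- Let α be a finite partially ordered type. Call a finite set M of pairs (a, b) ∈ α × α with a < b a strict matching if distinct pairs of M have distinct first components and distinct second components. Then the minimum number of chains (subsets of α that are totally ordered by ≤) whose union is all of α equals the cardinality of α minus the maximum cardinality of a strict matching. -/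
/-!
A strict matching `M` links the elements into paths `a < partner a < partner² a < ⋯`; every
element lies on a path starting at an element that is not a second component of `M`, so
`card α - #M` chains suffice. Conversely, choosing one chain of a cover for each
element partitions `α` into chains; matching each element with the next element of its part
leaves only the tops of the parts unmatched, at most one per chain of the cover.
-/

open Finset

section

variable {α : Type*} [PartialOrder α]

structure IsStrictMatching (M : Finset (α × α)) : Prop where
  lt : ∀ e ∈ M, e.1 < e.2
  injOn_fst : Set.InjOn Prod.fst (M : Set (α × α))
  injOn_snd : Set.InjOn Prod.snd (M : Set (α × α))

theorem isStrictMatching_empty : IsStrictMatching (∅ : Finset (α × α)) :=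
  ⟨by simp, by simp, by simp⟩

def IsChainCover (C : Finset (Finset α)) : Prop :=
  (∀ c ∈ C, IsChain (· ≤ ·) (c : Set α)) ∧ ∀ a, ∃ c ∈ C, a ∈ c

def HasChainFibers {β : Type*} (f : α → β) : Prop :=
  ∀ a b, f a = f b → a ≤ b ∨ b ≤ a

theorem Function.isChain_range_iterate_of_id_le {f : α → α} (hf : id ≤ f) (x : α) :
    IsChain (· ≤ ·) (Set.range fun n => f^[n] x) :=
  Monotone.isChain_range fun _ _ hmn => Function.monotone_iterate_of_id_le hf hmn x

theorem HasChainFibers.exists_isChainCover_card_le {β : Type*} [Fintype α] [DecidableEq β]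
    {f : α → β} (hf : HasChainFibers f) :
    ∃ C : Finset (Finset α), IsChainCover C ∧ #C ≤ #(univ.image f) := by
  classical
  refine ⟨(univ.image f).image fun r => univ.filter (f · = r), ⟨?_, fun a => ?_⟩, card_image_le⟩
  · simp only [mem_image, mem_univ, true_and]
    rintro _ ⟨_, ⟨a, rfl⟩, rfl⟩ x hx y hy -
    simp only [coe_filter, mem_univ, true_and, Set.mem_ofPred_eq] at hx hy
    exact hf x y (hx.trans hy.symm)
  · exact ⟨univ.filter (f · = f a), mem_image_of_mem _ (mem_image_of_mem _ (mem_univ a)), by simp⟩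

theorem IsChainCover.exists_hasChainFibers {C : Finset (Finset α)} (hC : IsChainCover C) :
    ∃ f : α → Finset α, HasChainFibers f ∧ ∀ a, f a ∈ C := by
  choose f hfC hmem using hC.2
  refine ⟨f, fun a b hab => ?_, hfC⟩
  exact (hC.1 _ (hfC a)).total (hmem a) (hab ▸ hmem b)

namespace IsStrictMatching

variable {M : Finset (α × α)}

noncomputable def partner (M : Finset (α × α)) (a : α) : α :=
  open Classical in if h : ∃ b, (a, b) ∈ M then h.choose else a

theorem partner_eq (hM : IsStrictMatching M) {a b : α} (h : (a, b) ∈ M) : partner M a = b := by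
  have hex : ∃ b, (a, b) ∈ M := ⟨b, h⟩
  rw [partner, dif_pos hex]
  exact congrArg Prod.snd (hM.injOn_fst hex.choose_spec h rfl)

theorem le_partner (hM : IsStrictMatching M) (a : α) : a ≤ partner M a := by
  by_cases h : ∃ b, (a, b) ∈ M
  · obtain ⟨b, hb⟩ := h
    rw [hM.partner_eq hb]
    exact (hM.lt _ hb).le
  · rw [partner, dif_neg h]

theorem exists_iterate_partner_eq [WellFoundedLT α] [DecidableEq α] (hM : IsStrictMatching M)
    (y : α) :
    ∃ r ∉ M.image Prod.snd, ∃ k, (partner M)^[k] r = y := by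
  induction y using WellFoundedLT.induction with
  | ind y ih =>
    by_cases hy : y ∈ M.image Prod.snd
    · obtain ⟨⟨p, y⟩, he, rfl⟩ := mem_image.mp hy
      obtain ⟨r, hr, k, rfl⟩ := ih p (hM.lt _ he)
      exact ⟨r, hr, k + 1, by rw [Function.iterate_succ_apply', hM.partner_eq he]⟩
    · exact ⟨y, hy, 0, rfl⟩

theorem exists_hasChainFibers_card_add_le [Fintype α] [DecidableEq α] (hM : IsStrictMatching M) :
    ∃ f : α → α, HasChainFibers f ∧ #(univ.image f) + #M ≤ Fintype.card α := by
  choose root hroot k hk using hM.exists_iterate_partner_eq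
  refine ⟨root, fun a b hab => ?_, ?_⟩
  · have hchain := Function.isChain_range_iterate_of_id_le hM.le_partner (root a)
    exact hchain.total ⟨k a, hk a⟩ ⟨k b, hab ▸ hk b⟩
  · have himage : univ.image root ⊆ (M.image Prod.snd)ᶜ := by
      intro r hr
      obtain ⟨a, -, rfl⟩ := mem_image.mp hr
      exact mem_compl.mpr (hroot a)
    calc #(univ.image root) + #M = #(univ.image root) + #(M.image Prod.snd) := by
          rw [card_image_of_injOn hM.injOn_snd]
      _ ≤ #(M.image Prod.snd)ᶜ + #(M.image Prod.snd) := by gcongr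
      _ = Fintype.card α := card_compl_add_card _

end IsStrictMatching

section

variable {β : Type*} (f : α → β)

def IsNextInFiber (a b : α) : Prop :=
  f b = f a ∧ a < b ∧ ∀ c, f c = f a → a < c → b ≤ c

variable {f}

theorem exists_isNextInFiber [WellFoundedLT α] (hf : HasChainFibers f)
    {a c : α} (hc : f c = f a) (hac : a < c) : ∃ b, IsNextInFiber f a b := by
  obtain ⟨b, ⟨hb, hab⟩, hmin⟩ :=
    wellFounded_lt.has_min {c | f c = f a ∧ a < c} ⟨c, hc, hac⟩
  refine ⟨b, hb, hab, fun c hc hac => ?_⟩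
  rcases hf b c (hb.trans hc.symm) with hbc | hcb
  · exact hbc
  · exact (eq_of_le_of_not_lt hcb (hmin c ⟨hc, hac⟩)).ge

theorem IsNextInFiber.unique_right {a b b' : α} (h : IsNextInFiber f a b)
    (h' : IsNextInFiber f a b') : b = b' :=
  le_antisymm (h.2.2 b' h'.1 h'.2.1) (h'.2.2 b h.1 h.2.1)

theorem IsNextInFiber.unique_left (hf : HasChainFibers f) {a a' b : α}
    (h : IsNextInFiber f a b) (h' : IsNextInFiber f a' b) : a = a' := by
  have hfa : f a' = f a := h'.1.symm.trans h.1
  rcases (hf a a' hfa.symm).imp lt_or_eq_of_le lt_or_eq_of_le with (hlt | heq) | (hlt | heq)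
  · exact absurd (h.2.2 a' hfa hlt) (h'.2.1.not_ge)
  · exact heq
  · exact absurd (h'.2.2 a hfa.symm hlt) (h.2.1.not_ge)
  · exact heq.symm

theorem HasChainFibers.exists_isStrictMatching_card_add_ge [Fintype α] [DecidableEq β]
    (hf : HasChainFibers f) :
    ∃ M : Finset (α × α), IsStrictMatching M ∧ Fintype.card α ≤ #M + #(univ.image f) := by
  classical
  set M : Finset (α × α) := univ.filter fun e => IsNextInFiber f e.1 e.2
  have hM : IsStrictMatching M := by
    refine ⟨fun e he => (mem_filter.mp he).2.2.1, ?_, ?_⟩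
    · rintro ⟨a, b⟩ he ⟨a', b'⟩ he' (rfl : a = a')
      simp only [M, coe_filter, mem_univ, true_and, Set.mem_ofPred_eq] at he he'
      rw [he.unique_right he']
    · rintro ⟨a, b⟩ he ⟨a', b'⟩ he' (rfl : b = b')
      simp only [M, coe_filter, mem_univ, true_and, Set.mem_ofPred_eq] at he he'
      rw [he.unique_left hf he']
  set T : Finset α := univ.filter fun a => ∀ c, f c = f a → ¬ a < c
  have hT : #T ≤ #(univ.image f) := by
    refine card_le_card_of_injOn f (fun a _ => mem_image_of_mem f (mem_univ a)) ?_
    intro a ha a' ha' hfa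
    simp only [T, coe_filter, mem_univ, true_and, Set.mem_ofPred_eq] at ha ha'
    rcases hf a a' hfa with h | h
    · exact h.eq_of_not_lt (ha a' hfa.symm)
    · exact (h.eq_of_not_lt (ha' a hfa)).symm
  have hTc : #Tᶜ ≤ #M := by
    calc #Tᶜ ≤ #(M.image Prod.fst) := card_le_card fun a ha => ?_
      _ = #M := card_image_of_injOn hM.injOn_fst
    simp only [T, compl_filter, mem_filter, mem_univ, true_and, not_forall, not_not] at ha
    obtain ⟨c, hc, hac⟩ := ha
    obtain ⟨b, hb⟩ := exists_isNextInFiber hf hc hac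
    exact mem_image.mpr ⟨(a, b), mem_filter.mpr ⟨mem_univ _, hb⟩, rfl⟩
  refine ⟨M, hM, ?_⟩
  calc Fintype.card α = #Tᶜ + #T := (card_compl_add_card T).symm
    _ ≤ #M + #(univ.image f) := add_le_add hTc hT

end

end

theorem min_chain_cover_eq_card_sub_max_matching_general
    {α : Type*} [Fintype α] [PartialOrder α] :
    ∃ k m : ℕ,
      IsLeast {j : ℕ | ∃ C : Finset (Finset α),
          (∀ c ∈ C, IsChain (· ≤ ·) (c : Set α)) ∧
          (∀ a : α, ∃ c ∈ C, a ∈ c) ∧ C.card = j} k ∧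
      IsGreatest {j : ℕ | ∃ M : Finset (α × α),
          (∀ e ∈ M, e.1 < e.2) ∧
          Set.InjOn Prod.fst (M : Set (α × α)) ∧
          Set.InjOn Prod.snd (M : Set (α × α)) ∧ M.card = j} m ∧
      k = Fintype.card α - m := by
  classical
  obtain ⟨M₀, hM₀, hmax⟩ := exists_max_image
    ({M | IsStrictMatching M} : Finset (Finset (α × α))) card ⟨∅, by simp [isStrictMatching_empty]⟩
  replace hM₀ : IsStrictMatching M₀ := (mem_filter.mp hM₀).2
  have hlower : ∀ C : Finset (Finset α), IsChainCover C → Fintype.card α - #M₀ ≤ #C := by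
    intro C hC
    obtain ⟨f, hf, hfC⟩ := hC.exists_hasChainFibers
    obtain ⟨M, hM, hcard⟩ := hf.exists_isStrictMatching_card_add_ge
    have hM_le := hmax M (mem_filter.mpr ⟨mem_univ M, hM⟩)
    have himage : #(univ.image f) ≤ #C := card_le_card (image_subset_iff.mpr fun a _ => hfC a)
    omega
  obtain ⟨f, hf, hfcard⟩ := hM₀.exists_hasChainFibers_card_add_le
  obtain ⟨C₀, hC₀, hC₀card⟩ := hf.exists_isChainCover_card_le
  have hC₀_eq : #C₀ = Fintype.card α - #M₀ := by
    have := hlower C₀ hC₀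
    omega
  refine ⟨#C₀, #M₀, ⟨⟨C₀, hC₀.1, hC₀.2, rfl⟩, ?_⟩,
    ⟨⟨M₀, hM₀.lt, hM₀.injOn_fst, hM₀.injOn_snd, rfl⟩, ?_⟩, hC₀_eq⟩
  · rintro _ ⟨C, hchain, hcover, rfl⟩
    exact hC₀_eq ▸ hlower C ⟨hchain, hcover⟩
  · rintro _ ⟨M, hlt, hfst, hsnd, rfl⟩
    exact hmax M (mem_filter.mpr ⟨mem_univ M, hlt, hfst, hsnd⟩)

/-- For a finite partially ordered type `α`, the minimum number of
chains (subsets totally ordered by `≤`) whose union is all of `α` equals the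
cardinality of `α` minus the maximum cardinality of a strict matching, i.e. a
finite set of pairs `(a, b)` with `a < b`, no two sharing a first component and
no two sharing a second component. -/
theorem min_chain_cover_eq_card_sub_max_matching
    {α : Type*} [Fintype α] [PartialOrder α] [DecidableEq α] :
    ∃ k m : ℕ,
      IsLeast {j : ℕ | ∃ C : Finset (Finset α),
          (∀ c ∈ C, IsChain (· ≤ ·) (c : Set α)) ∧
          (∀ a : α, ∃ c ∈ C, a ∈ c) ∧ C.card = j} k ∧
      IsGreatest {j : ℕ | ∃ M : Finset (α × α),
          (∀ e ∈ M, e.1 < e.2) ∧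
          Set.InjOn Prod.fst (M : Set (α × α)) ∧
          Set.InjOn Prod.snd (M : Set (α × α)) ∧ M.card = j} m ∧
      k = Fintype.card α - m :=
  min_chain_cover_eq_card_sub_max_matching_general
end

section
/- Let R be a finite set of reads over alphabet A for a genome of length n ≥ 1. The set cc(R) of haplotypes completely consistent with R is an explaining set for R if and only if every irredundant read of R occurs in some covering chain in R. -/
/-! Basic definitions about reads, following Eriksson et al.,
"Viral population estimation using pyrosequencing".

A read is a pair `r = (s, w)` of a start position `s : ℕ` and a word
`w : List A`; it covers positions `s, …, s + w.length - 1`. -/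

/-- The read `r` covers position `p`. -/
def Covers {A : Type*} (r : ℕ × List A) (p : ℕ) : Prop :=
  r.1 ≤ p ∧ p < r.1 + r.2.length

/-- Two reads agree on their overlap: at every position covered by both, the
corresponding letters of the two reads are equal. -/
def Agree {A : Type*} (r r' : ℕ × List A) : Prop :=
  ∀ p, (hp : Covers r p) → (hp' : Covers r' p) →
    r.2.get ⟨p - r.1, by have h1 := hp.1; have h2 := hp.2; omega⟩ =
    r'.2.get ⟨p - r'.1, by have h1 := hp'.1; have h2 := hp'.2; omega⟩

/-- Two reads overlap: some position is covered by both. -/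
def Overlaps {A : Type*} (r r' : ℕ × List A) : Prop :=
  ∃ p, Covers r p ∧ Covers r' p

/-- A valid read for a genome of length `n`: nonempty word, fitting inside the
genome. -/
def ValidRead {A : Type*} (n : ℕ) (r : ℕ × List A) : Prop :=
  r.2 ≠ [] ∧ r.1 + r.2.length ≤ n

/-- The haplotype `h : Fin n → A` is consistent with the read `r`. -/
def Consistent {A : Type*} (n : ℕ) (h : Fin n → A) (r : ℕ × List A) : Prop :=
  ∀ i, (hi : i < r.2.length) → (hn : r.1 + i < n) →
    h ⟨r.1 + i, hn⟩ = r.2.get ⟨i, hi⟩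

/-- A read `r` is redundant in `R` if some other read of `R` covers all positions
of `r` and agrees with `r` on their overlap. -/
def Redundant {A : Type*} (R : Finset (ℕ × List A)) (r : ℕ × List A) : Prop :=
  ∃ r' ∈ R, r' ≠ r ∧ (∀ p, Covers r p → Covers r' p) ∧ Agree r r'

/-- A covering chain in `R` for a genome of length `n`: a nonempty sequence of
reads of `R` with nondecreasing start positions and nondecreasing end
positions, whose first read covers position `0`, whose last read covers
position `n - 1`, and in which each consecutive pair of reads overlaps and
agrees on its overlap. -/
def CoveringChain {A : Type*} (n : ℕ) (R : Finset (ℕ × List A))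
    (c : List (ℕ × List A)) : Prop :=
  c ≠ [] ∧ (∀ r ∈ c, r ∈ R) ∧
  c.Chain' (fun r r' => r.1 ≤ r'.1) ∧
  c.Chain' (fun r r' => r.1 + r.2.length ≤ r'.1 + r'.2.length) ∧
  (∀ r ∈ c.head?, Covers r 0) ∧
  (∀ r ∈ c.getLast?, Covers r (n - 1)) ∧
  c.Chain' (fun r r' => Overlaps r r' ∧ Agree r r')

/-- A haplotype is completely consistent with `R` if it can be constructed from a
covering chain of reads of `R`: i.e., some covering chain in `R` consists of
reads all consistent with the haplotype. -/
def CompletelyConsistent {A : Type*} (n : ℕ) (R : Finset (ℕ × List A))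
    (h : Fin n → A) : Prop :=
  ∃ c, CoveringChain n R c ∧ ∀ r ∈ c, Consistent n h r

/-! If an irredundant read `r` is consistent with a haplotype spelled by a covering chain `c`,
then every read of `c` agrees with `r` and none contains it. So `c` consists of the reads starting
weakly before `r`, then reads strictly inside `r`, then the reads ending weakly after `r`;
replacing the middle block by `r` yields a covering chain through `r`.

Conversely, a longest read subsuming a given read `r` is irredundant, hence lies on a covering
chain. The reads of a covering chain pairwise agree (a position covered by two of them is covered
by every read in between), so they glue to a haplotype, which is then consistent with `r`. -/

lemma List.IsChain.append_cons {α : Type*} {R : α → α → Prop} {l₁ l₂ : List α} {a : α}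
    (h₁ : l₁.IsChain R) (h₂ : l₂.IsChain R) (ha₁ : ∀ x ∈ l₁.getLast?, R x a)
    (ha₂ : ∀ y ∈ l₂.head?, R a y) : (l₁ ++ a :: l₂).IsChain R :=
  h₁.append (h₂.cons ha₂) (by simpa using ha₁)

lemma List.IsChain.rel_getLast?_takeWhile_head?_dropWhile {α : Type*} {R : α → α → Prop}
    {l : List α} (h : l.IsChain R) (p : α → Bool) :
    ∀ x ∈ (l.takeWhile p).getLast?, ∀ y ∈ (l.dropWhile p).head?, R x y :=
  (List.isChain_append.1 (List.takeWhile_append_dropWhile ▸ h)).2.2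

section Reads

variable {A : Type*}

/-- `Redundant R r` unfolds to: some read of `R` other than `r` subsumes `r`. -/
def Subsumes (r' r : ℕ × List A) : Prop :=
  (∀ p, Covers r p → Covers r' p) ∧ Agree r r'

lemma Agree.symm {r r' : ℕ × List A} (h : Agree r r') : Agree r' r :=
  fun p hp hp' => (h p hp' hp).symm

lemma Agree.trans_of_covers {x y z : ℕ × List A} (hxy : Agree x y) (hyz : Agree y z)
    (hcov : ∀ p, Covers x p → Covers z p → Covers y p) : Agree x z :=
  fun p hx hz => (hxy p hx (hcov p hx hz)).trans (hyz p (hcov p hx hz) hz)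

lemma read_eq_of_agree {r r' : ℕ × List A} (hs : r.1 = r'.1)
    (hl : r.2.length = r'.2.length) (ha : Agree r r') : r = r' := by
  obtain ⟨s, w⟩ := r
  obtain ⟨s', w'⟩ := r'
  obtain rfl : s = s' := hs
  refine Prod.ext rfl (List.ext_get hl fun i h₁ h₂ => ?_)
  simpa using ha (s + i) ⟨le_self_add, by simp [h₁]⟩ ⟨le_self_add, by simp [h₂]⟩

lemma covers_subset_iff {r r' : ℕ × List A} (hne : r.2 ≠ []) :
    (∀ p, Covers r p → Covers r' p) ↔ r'.1 ≤ r.1 ∧ r.1 + r.2.length ≤ r'.1 + r'.2.length := by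
  have hl : 0 < r.2.length := List.length_pos_iff.mpr hne
  refine ⟨fun h => ?_, fun h p hp => ⟨h.1.trans hp.1, hp.2.trans_le h.2⟩⟩
  have h₁ := h r.1 ⟨le_rfl, by omega⟩
  have h₂ := h (r.1 + r.2.length - 1) ⟨by omega, by omega⟩
  exact ⟨h₁.1, by have := h₂.2; omega⟩

lemma Subsumes.refl (r : ℕ × List A) : Subsumes r r := ⟨fun _ hp => hp, fun _ _ _ => rfl⟩

lemma Subsumes.trans {r r' r'' : ℕ × List A} (h' : Subsumes r'' r') (h : Subsumes r' r) :
    Subsumes r'' r :=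
  ⟨fun p hp => h'.1 p (h.1 p hp), h.2.trans_of_covers h'.2 fun p hp _ => h.1 p hp⟩

lemma Subsumes.eq_of_length_le {r r' : ℕ × List A} (hne : r.2 ≠ []) (h : Subsumes r' r)
    (hlen : r'.2.length ≤ r.2.length) : r' = r := by
  have := (covers_subset_iff hne).1 h.1
  exact (read_eq_of_agree (by omega) (by omega) h.2).symm

lemma exists_irredundant_subsumes {R : Finset (ℕ × List A)} {r : ℕ × List A} (hr : r ∈ R)
    (hne : r.2 ≠ []) : ∃ r' ∈ R, ¬ Redundant R r' ∧ Subsumes r' r := by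
  classical
  obtain ⟨r', hr'S, hmax⟩ :=
    (R.filter (Subsumes · r)).exists_max_image (·.2.length) ⟨r, by simp [hr, Subsumes.refl]⟩
  rw [Finset.mem_filter] at hr'S
  refine ⟨r', hr'S.1, fun ⟨r'', hr'', hne'', (hsub : Subsumes r'' r')⟩ => hne'' ?_, hr'S.2⟩
  have hr'ne : r'.2 ≠ [] := by
    have := ((covers_subset_iff hne).1 hr'S.2.1)
    rw [← List.length_pos_iff] at hne ⊢
    omega
  exact hsub.eq_of_length_le hr'ne
    (hmax r'' (Finset.mem_filter.2 ⟨hr'', Subsumes.trans hsub hr'S.2⟩))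

section Consistency

variable {n : ℕ} {h : Fin n → A}

lemma consistent_iff_forall_covers {r : ℕ × List A} :
    Consistent n h r ↔ ∀ p (hp : Covers r p) (hn : p < n),
      h ⟨p, hn⟩ = r.2.get ⟨p - r.1, by have := hp.1; have := hp.2; omega⟩ := by
  refine ⟨fun H p hp hn => ?_, fun H i hi hn => ?_⟩
  · obtain ⟨i, rfl⟩ : ∃ i, p = r.1 + i := ⟨p - r.1, by have := hp.1; omega⟩
    simpa using H i (by have := hp.2; omega) hn
  · simpa using H (r.1 + i) ⟨le_self_add, by omega⟩ hn

lemma Consistent.agree {r r' : ℕ × List A} (hr : r.1 + r.2.length ≤ n)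
    (h₁ : Consistent n h r) (h₂ : Consistent n h r') : Agree r r' := by
  rw [consistent_iff_forall_covers] at h₁ h₂
  intro p hp hp'
  have hn : p < n := by have := hp.2; omega
  exact (h₁ p hp hn).symm.trans (h₂ p hp' hn)

lemma Consistent.of_subsumes {r r' : ℕ × List A} (hc : Consistent n h r') (hs : Subsumes r' r) :
    Consistent n h r := by
  rw [consistent_iff_forall_covers] at hc ⊢
  intro p hp hn
  exact (hc p (hs.1 p hp) hn).trans (hs.2 p hp (hs.1 p hp)).symm

lemma exists_consistent_of_agree {S : Set (ℕ × List A)}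
    (hcov : ∀ p < n, ∃ x ∈ S, Covers x p) (hagree : ∀ x ∈ S, ∀ y ∈ S, Agree x y) :
    ∃ h : Fin n → A, ∀ y ∈ S, Consistent n h y := by
  choose f hfS hfp using hcov
  refine ⟨fun p => (f p p.2).2.get ⟨p - (f p p.2).1, by
    have := (hfp p p.2).1; have := (hfp p p.2).2; omega⟩, fun y hy => ?_⟩
  rw [consistent_iff_forall_covers]
  exact fun p hp hn => hagree _ (hfS p hn) y hy p (hfp p hn) hp

end Consistency

lemma exists_covers_of_isChain_overlaps :
    ∀ {c : List (ℕ × List A)}, c.IsChain Overlaps → c ≠ [] → ∀ {p : ℕ},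
      (∀ x ∈ c.head?, x.1 ≤ p) → (∀ x ∈ c.getLast?, p < x.1 + x.2.length) → ∃ x ∈ c, Covers x p
  | [a], _, _, _, hhead, hlast => ⟨a, by simp, hhead a rfl, hlast a rfl⟩
  | a :: b :: t, hc, _, p, hhead, hlast => by
    by_cases hpa : p < a.1 + a.2.length
    · exact ⟨a, by simp, hhead a rfl, hpa⟩
    obtain ⟨q, hqa, hqb⟩ := (List.isChain_cons_cons.1 hc).1
    obtain ⟨x, hx, hxp⟩ := exists_covers_of_isChain_overlaps hc.tail (by simp) (p := p)
      (by have := hqa.2; have := hqb.1; simp; omega) (by simpa using hlast)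
    exact ⟨x, List.mem_cons_of_mem _ hx, hxp⟩

lemma pairwise_agree_of_isChain :
    ∀ {c : List (ℕ × List A)}, c.Pairwise (fun x y => x.1 ≤ y.1) →
      c.IsChain (fun x y => x.1 + x.2.length ≤ y.1 + y.2.length) → c.IsChain Agree →
      c.Pairwise Agree
  | [], _, _, _ => .nil
  | [_], _, _, _ => List.pairwise_singleton _ _
  | x :: y :: t, hs, he, ha => by
    have ih := pairwise_agree_of_isChain hs.of_cons he.tail ha.tail
    refine .cons (fun z hz => ?_) ih
    have hxy := (List.isChain_cons_cons.1 ha).1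
    obtain rfl | hz := List.mem_cons.1 hz
    · exact hxy
    refine hxy.trans_of_covers (List.rel_of_pairwise_cons ih hz) fun p hxp hzp => ⟨?_, ?_⟩
    · exact (List.rel_of_pairwise_cons hs.of_cons hz).trans hzp.1
    · exact hxp.2.trans_le (List.isChain_cons_cons.1 he).1

namespace CoveringChain

variable {n : ℕ} {R : Finset (ℕ × List A)} {c : List (ℕ × List A)} {r : ℕ × List A}

lemma exists_covers (hc : CoveringChain n R c) {p : ℕ} (hp : p < n) : ∃ x ∈ c, Covers x p :=
  exists_covers_of_isChain_overlaps (hc.2.2.2.2.2.2.imp fun _ _ h => h.1) hc.1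
    (fun x hx => (hc.2.2.2.2.1 x hx).1.trans p.zero_le)
    (fun x hx => by have := (hc.2.2.2.2.2.1 x hx).2; omega)

lemma agree (hc : CoveringChain n R c) : ∀ x ∈ c, ∀ y ∈ c, Agree x y := by
  have hpw := pairwise_agree_of_isChain (List.isChain_iff_pairwise.1 hc.2.2.1) hc.2.2.2.1
    (hc.2.2.2.2.2.2.imp fun _ _ h => h.2)
  exact hpw.forall_of_forall_of_flip (fun _ _ _ _ _ => rfl) (hpw.imp Agree.symm)

lemma exists_consistent (hc : CoveringChain n R c) :
    ∃ h : Fin n → A, ∀ x ∈ c, Consistent n h x :=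
  exists_consistent_of_agree (S := {x | x ∈ c}) (fun _ hp => hc.exists_covers hp) hc.agree

lemma start_lt_end_of_getLast?_takeWhile (hc : CoveringChain n R c) (hvr : ValidRead n r)
    {x : ℕ × List A} (hx : x ∈ (c.takeWhile (·.1 ≤ r.1)).getLast?) :
    r.1 < x.1 + x.2.length := by
  have ⟨_, _, _, _, _, hlast, hlinks⟩ := hc
  have hlen := List.length_pos_iff.2 hvr.1
  cases hD : (c.dropWhile (·.1 ≤ r.1)).head? with
  | none =>
    have hxc : x ∈ c.getLast? := by
      rw [← List.takeWhile_append_dropWhile (p := (·.1 ≤ r.1)) (l := c),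
        List.head?_eq_none_iff.1 hD, List.append_nil]
      exact hx
    have := (hlast x hxc).2
    have := hvr.2
    omega
  | some y =>
    have hy := List.head?_dropWhile_not (·.1 ≤ r.1) c
    obtain ⟨q, hxq, hyq⟩ := (hlinks.rel_getLast?_takeWhile_head?_dropWhile _ x hx y hD).1
    simp only [hD, decide_eq_false_iff_not, not_le] at hy
    have := hxq.2; have := hyq.1
    omega

lemma start_lt_end_of_head?_dropWhile (hc : CoveringChain n R c) (hne : r.2 ≠ [])
    {z : ℕ × List A}
    (hz : z ∈ (c.dropWhile fun x => x.1 + x.2.length < r.1 + r.2.length).head?) :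
    z.1 < r.1 + r.2.length := by
  have ⟨_, _, _, _, hhead, _, hlinks⟩ := hc
  have hlen := List.length_pos_iff.2 hne
  cases hT : (c.takeWhile fun x => x.1 + x.2.length < r.1 + r.2.length).getLast? with
  | none =>
    have hzc : z ∈ c.head? := by
      rw [← List.takeWhile_append_dropWhile (p := fun x => x.1 + x.2.length < r.1 + r.2.length)
        (l := c), List.getLast?_eq_none_iff.1 hT, List.nil_append]
      exact hz
    have := (hhead z hzc).1
    omega
  | some w =>
    have hw : w.1 + w.2.length < r.1 + r.2.length := by
      simpa using List.mem_takeWhile_imp (List.mem_of_getLast? hT)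
    obtain ⟨q, hwq, hzq⟩ := (hlinks.rel_getLast?_takeWhile_head?_dropWhile _ w hT z hz).1
    have := hwq.2; have := hzq.1
    omega

lemma head?_takeWhile_start_le (hc : CoveringChain n R c) :
    (c.takeWhile (·.1 ≤ r.1)).head? = c.head? := by
  obtain ⟨x, t, rfl⟩ := List.exists_cons_of_ne_nil hc.1
  have := (hc.2.2.2.2.1 x rfl).1
  simp [show x.1 ≤ r.1 by omega]

lemma getLast?_dropWhile_end_lt (hc : CoveringChain n R c) (hr : r.1 + r.2.length ≤ n) :
    (c.dropWhile fun x => x.1 + x.2.length < r.1 + r.2.length).getLast? = c.getLast? := by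
  have hD : (c.dropWhile fun x => x.1 + x.2.length < r.1 + r.2.length) ≠ [] := by
    rw [Ne, List.dropWhile_eq_nil_iff]
    intro h
    obtain ⟨x, hx⟩ := Option.ne_none_iff_exists'.1 (mt List.getLast?_eq_none_iff.1 hc.1)
    have := (hc.2.2.2.2.2.1 x hx).2
    have := h x (List.mem_of_getLast? hx)
    simp only [decide_eq_true_eq] at this
    omega
  conv_rhs => rw [← List.takeWhile_append_dropWhile
    (p := fun x => x.1 + x.2.length < r.1 + r.2.length) (l := c)]
  rw [List.getLast?_append_of_ne_nil _ hD]

theorem splice (hc : CoveringChain n R c) (hr : r ∈ R) (hvr : ValidRead n r)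
    (hagree : ∀ x ∈ c, Agree r x)
    (hnot_contains : ∀ x ∈ c, x.1 ≤ r.1 → x.1 + x.2.length < r.1 + r.2.length) :
    CoveringChain n R (c.takeWhile (·.1 ≤ r.1) ++
      r :: c.dropWhile fun x => x.1 + x.2.length < r.1 + r.2.length) := by
  have ⟨hne, hmem, hstarts, hends, hhead, hlast, hlinks⟩ := hc
  set L := c.takeWhile (·.1 ≤ r.1)
  set D := c.dropWhile fun x => x.1 + x.2.length < r.1 + r.2.length with hD
  have hlen := List.length_pos_iff.2 hvr.1
  have hLc : ∀ x ∈ L, x ∈ c := fun x hx => List.takeWhile_subset _ hx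
  have hDc : ∀ x ∈ D, x ∈ c := fun x hx => List.dropWhile_subset _ hx
  have hLlast : ∀ x ∈ L.getLast?, Overlaps x r ∧ Agree x r ∧
      x.1 ≤ r.1 ∧ x.1 + x.2.length < r.1 + r.2.length := by
    intro x hx
    have hxL := List.mem_of_getLast? hx
    have hxr : x.1 ≤ r.1 := by simpa using List.mem_takeWhile_imp hxL
    have := hc.start_lt_end_of_getLast?_takeWhile hvr hx
    exact ⟨⟨r.1, ⟨hxr, this⟩, ⟨le_rfl, by omega⟩⟩, (hagree x (hLc x hxL)).symm, hxr,
      hnot_contains x (hLc x hxL) hxr⟩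
  have hDhead : ∀ z ∈ D.head?, Overlaps r z ∧ Agree r z ∧
      r.1 ≤ z.1 ∧ r.1 + r.2.length ≤ z.1 + z.2.length := by
    intro z hz
    have hzc := hDc z (List.mem_of_head? hz)
    have hend : r.1 + r.2.length ≤ z.1 + z.2.length := by
      have := List.head?_dropWhile_not (fun x => x.1 + x.2.length < r.1 + r.2.length) c
      rw [← hD, hz] at this
      simpa using this
    have hstart : r.1 < z.1 := by
      by_contra! h
      exact absurd (hnot_contains z hzc h) (by omega)
    have := hc.start_lt_end_of_head?_dropWhile hvr.1 hz
    exact ⟨⟨z.1, ⟨hstart.le, this⟩, ⟨le_rfl, by omega⟩⟩, hagree z hzc, hstart.le, hend⟩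
  have hLhead : L.head? = c.head? := hc.head?_takeWhile_start_le
  have hDlast : D.getLast? = c.getLast? := hc.getLast?_dropWhile_end_lt hvr.2
  have hLne : L ≠ [] := fun h => hne (List.head?_eq_none_iff.1 (by rw [← hLhead, h]; rfl))
  have hDne : D ≠ [] := fun h => hne (List.getLast?_eq_none_iff.1 (by rw [← hDlast, h]; rfl))
  refine ⟨by simp, ?_, ?_, ?_, ?_, ?_, ?_⟩
  · simp only [List.mem_append, List.mem_cons]
    rintro x (hx | rfl | hx)
    exacts [hmem x (hLc x hx), hr, hmem x (hDc x hx)]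
  · exact (hstarts.prefix (List.takeWhile_prefix _)).append_cons
      (hstarts.suffix (List.dropWhile_suffix _)) (fun x hx => (hLlast x hx).2.2.1)
      (fun z hz => (hDhead z hz).2.2.1)
  · exact (hends.prefix (List.takeWhile_prefix _)).append_cons
      (hends.suffix (List.dropWhile_suffix _)) (fun x hx => (hLlast x hx).2.2.2.le)
      (fun z hz => (hDhead z hz).2.2.2)
  · rwa [List.head?_append_of_ne_nil _ hLne, hLhead]
  · rwa [← List.singleton_append, ← List.append_assoc, List.getLast?_append_of_ne_nil _ hDne,
      hDlast]
  · exact (hlinks.prefix (List.takeWhile_prefix _)).append_cons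
      (hlinks.suffix (List.dropWhile_suffix _)) (fun x hx => (hLlast x hx).imp_right And.left)
      (fun z hz => (hDhead z hz).imp_right And.left)

end CoveringChain

end Reads

theorem completelyConsistent_explains_iff_general {A : Type*} (n : ℕ)
    (R : Finset (ℕ × List A)) (hvalid : ∀ r ∈ R, ValidRead n r) :
    (∀ r ∈ R, ∃ h : Fin n → A, CompletelyConsistent n R h ∧ Consistent n h r) ↔
    (∀ r ∈ R, ¬ Redundant R r → ∃ c, CoveringChain n R c ∧ r ∈ c) := by
  constructor
  · intro H r hr hirr
    obtain ⟨h, ⟨c, hc, hcons⟩, hconsr⟩ := H r hr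
    by_cases hrc : r ∈ c
    · exact ⟨c, hc, hrc⟩
    have hagree : ∀ x ∈ c, Agree r x := fun x hx => hconsr.agree (hvalid r hr).2 (hcons x hx)
    have hnot_contains : ∀ x ∈ c, x.1 ≤ r.1 → x.1 + x.2.length < r.1 + r.2.length := by
      intro x hx hstart
      by_contra! hend
      exact hirr ⟨x, hc.2.1 x hx, ne_of_mem_of_not_mem hx hrc,
        (covers_subset_iff (hvalid r hr).1).2 ⟨hstart, hend⟩, hagree x hx⟩
    exact ⟨_, hc.splice hr (hvalid r hr) hagree hnot_contains, by simp⟩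
  · intro H r hr
    obtain ⟨r', hr', hirr, hsub⟩ := exists_irredundant_subsumes hr (hvalid r hr).1
    obtain ⟨c, hc, hr'c⟩ := H r' hr' hirr
    obtain ⟨h, hh⟩ := hc.exists_consistent
    exact ⟨h, ⟨c, hc, hh⟩, (hh r' hr'c).of_subsumes hsub⟩

/-- **Proposition of Eriksson et al..** The set of haplotypes
completely consistent with `R` is an explaining set for `R` (every read of `R`
is consistent with some completely consistent haplotype) if and only if every
irredundant read of `R` occurs in some covering chain in `R`. -/
theorem completelyConsistent_explains_iff {A : Type*} (n : ℕ) (hn : 1 ≤ n)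
    (R : Finset (ℕ × List A)) (hvalid : ∀ r ∈ R, ValidRead n r) :
    (∀ r ∈ R, ∃ h : Fin n → A, CompletelyConsistent n R h ∧ Consistent n h r) ↔
    (∀ r ∈ R, ¬ Redundant R r → ∃ c, CoveringChain n R c ∧ r ∈ c) :=
  completelyConsistent_explains_iff_general n R hvalid
end

section
/- Let r_1, …, r_k be a finite sequence of reads over alphabet A with nondecreasing start positions and nondecreasing end positions, such that each consecutive pair r_i, r_{i+1} overlaps and agrees on its overlap. Then any two reads r_i and r_j of the sequence agree on their overlap. -/
/-!
If `r` precedes `r'` and `r'` precedes `r''` in the chain, a position covered by both `r` and `r''`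
lies at or after the start of `r'` (which is at most that of `r''`) and before the end of `r'`
(which is at least that of `r`), so `r'` covers it too. Agreement on overlaps is therefore
transitive through `r'`, and induction along the chain gives agreement of all pairs.
-/

section

variable {A : Type*}

theorem Covers.of_start_le_of_end_le {r₁ r₂ r₃ : ℕ × List A} {p : ℕ}
    (h₁ : Covers r₁ p) (h₃ : Covers r₃ p) (hstart : r₂.1 ≤ r₃.1)
    (hend : r₁.1 + r₁.2.length ≤ r₂.1 + r₂.2.length) : Covers r₂ p :=
  ⟨hstart.trans h₃.1, h₁.2.trans_le hend⟩

theorem Agree.trans_of_covers_s7 {r₁ r₂ r₃ : ℕ × List A} (h₁₂ : Agree r₁ r₂) (h₂₃ : Agree r₂ r₃)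
    (hcovers : ∀ p, Covers r₁ p → Covers r₃ p → Covers r₂ p) : Agree r₁ r₃ :=
  fun p hp₁ hp₃ =>
    have hp₂ := hcovers p hp₁ hp₃
    (h₁₂ p hp₁ hp₂).trans (h₂₃ p hp₂ hp₃)

open List in
theorem pairwise_agree_of_isChain_s7 {c : List (ℕ × List A)}
    (hstart : c.Pairwise fun r r' => r.1 ≤ r'.1)
    (hend : c.IsChain fun r r' => r.1 + r.2.length ≤ r'.1 + r'.2.length)
    (hagree : c.IsChain Agree) : c.Pairwise Agree := by
  induction c with
  | nil => exact .nil
  | cons a l ih =>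
    cases l with
    | nil => exact pairwise_singleton _ _
    | cons b l =>
      rw [isChain_cons_cons] at hend hagree
      have hbl : (b :: l).Pairwise Agree := ih hstart.of_cons hend.2 hagree.2
      refine pairwise_cons.2 ⟨fun r hr => ?_, hbl⟩
      rcases mem_cons.1 hr with rfl | hr
      · exact hagree.1
      · exact hagree.1.trans_of_covers_s7 (rel_of_pairwise_cons hbl hr) fun _ h₁ h₃ =>
          h₁.of_start_le_of_end_le h₃ (rel_of_pairwise_cons hstart.of_cons hr) hend.1

end

theorem chain_pairwise_agree_general {A : Type*} (c : List (ℕ × List A))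
    (hstart : c.Chain' (fun r r' => r.1 ≤ r'.1))
    (hend : c.Chain' (fun r r' => r.1 + r.2.length ≤ r'.1 + r'.2.length))
    (hconsec : c.Chain' (fun r r' => Overlaps r r' ∧ Agree r r')) :
    c.Pairwise Agree :=
  have : Trans (fun r r' : ℕ × List A => r.1 ≤ r'.1) (fun r r' : ℕ × List A => r.1 ≤ r'.1)
      (fun r r' : ℕ × List A => r.1 ≤ r'.1) := ⟨le_trans⟩
  pairwise_agree_of_isChain_s7 (List.IsChain.pairwise hstart) hend
    (List.IsChain.imp (fun _ _ h => h.2) hconsec)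

/-- If a finite sequence of reads (nonempty words) has
nondecreasing start positions, nondecreasing end positions, and each consecutive
pair of reads overlaps and agrees on its overlap, then any two reads of the
sequence agree on their overlap. -/
theorem chain_pairwise_agree {A : Type*} (c : List (ℕ × List A))
    (hne : ∀ r ∈ c, r.2 ≠ [])
    (hstart : c.Chain' (fun r r' => r.1 ≤ r'.1))
    (hend : c.Chain' (fun r r' => r.1 + r.2.length ≤ r'.1 + r'.2.length))
    (hconsec : c.Chain' (fun r r' => Overlaps r r' ∧ Agree r r')) :
    c.Pairwise Agree :=
  chain_pairwise_agree_general c hstart hend hconsec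
end
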